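/- For the complete bipartite graph K_{m,n} with m,n ≥ 2, the eccentricity Laplacian spectrum is {0 with multiplicity 2, 2m with multiplicity m−1, 2n with multiplicity n−1}. -/

import Mathlib

open Matrix Polynomial Finset BigOperators

/-- The eccentricity of a vertex: maximum distance to any other vertex. -/
noncomputable def ecc {V : Type*} [Fintype V] (G : SimpleGraph V) (v : V) : ℕ :=
  Finset.univ.sup (G.dist v)

/-- The eccentricity matrix of a graph. -/
noncomputable def eccMatrix {V : Type*} [Fintype V] [DecidableEq V] (G : SimpleGraph V) : Matrix V V ℝ :=
  Matrix.of fun i j =>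
    if G.dist i j = min (ecc G i) (ecc G j) ∧ i ≠ j then (G.dist i j : ℝ) else 0

/-- The E-transmission of a vertex: the row sum of the eccentricity matrix. -/
noncomputable def eccTrans {V : Type*} [Fintype V] [DecidableEq V] (G : SimpleGraph V) (v : V) : ℝ :=
  ∑ j, eccMatrix G v j

/-- The eccentricity Laplacian. -/
noncomputable def eccLap {V : Type*} [Fintype V] [DecidableEq V] (G : SimpleGraph V) :
    Matrix V V ℝ :=
  Matrix.diagonal (eccTrans G) - eccMatrix G

/-- The eccentricity signless Laplacian. -/
noncomputable def eccSignlessLap {V : Type*} [Fintype V] [DecidableEq V] (G : SimpleGraph V) :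
    Matrix V V ℝ :=
  Matrix.diagonal (eccTrans G) + eccMatrix G

/-- The E-Wiener index. -/
noncomputable def eccWiener {V : Type*} [Fintype V] [DecidableEq V] (G : SimpleGraph V) : ℝ :=
  (1 / 2) * ∑ i, ∑ j, eccMatrix G i j


section Aux
variable {m n : ℕ}

lemma adj_lr (a : Fin m) (b : Fin n) :
    (completeBipartiteGraph (Fin m) (Fin n)).Adj (Sum.inl a) (Sum.inr b) := by simp

lemma dist_lr (a : Fin m) (b : Fin n) :
    (completeBipartiteGraph (Fin m) (Fin n)).dist (Sum.inl a) (Sum.inr b) = 1 :=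
  SimpleGraph.dist_eq_one_iff_adj.mpr (adj_lr a b)

lemma dist_ll (hn : 1 ≤ n) {a b : Fin m} (hab : a ≠ b) :
    (completeBipartiteGraph (Fin m) (Fin n)).dist (Sum.inl a) (Sum.inl b) = 2 := by
  obtain ⟨c⟩ : Nonempty (Fin n) := ⟨⟨0, hn⟩⟩
  let w : (completeBipartiteGraph (Fin m) (Fin n)).Walk (Sum.inl a) (Sum.inl b) :=
    .cons (adj_lr a c) (.cons (adj_lr b c).symm .nil)
  have hle := SimpleGraph.dist_le w
  simp only [w, SimpleGraph.Walk.length_cons, SimpleGraph.Walk.length_nil] at hle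
  have h0 : (completeBipartiteGraph (Fin m) (Fin n)).dist (Sum.inl a) (Sum.inl b) ≠ 0 := by
    rw [Ne, SimpleGraph.dist_eq_zero_iff_eq_or_not_reachable]
    push_neg
    exact ⟨by simpa using hab, ⟨w⟩⟩
  have h1 : (completeBipartiteGraph (Fin m) (Fin n)).dist (Sum.inl a) (Sum.inl b) ≠ 1 := by
    rw [Ne, SimpleGraph.dist_eq_one_iff_adj]
    simp
  omega

lemma dist_rl (a : Fin n) (b : Fin m) :
    (completeBipartiteGraph (Fin m) (Fin n)).dist (Sum.inr a) (Sum.inl b) = 1 := by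
  rw [SimpleGraph.dist_comm]; exact dist_lr b a

lemma dist_rr (hm : 1 ≤ m) {a b : Fin n} (hab : a ≠ b) :
    (completeBipartiteGraph (Fin m) (Fin n)).dist (Sum.inr a) (Sum.inr b) = 2 := by
  obtain ⟨c⟩ : Nonempty (Fin m) := ⟨⟨0, hm⟩⟩
  let w : (completeBipartiteGraph (Fin m) (Fin n)).Walk (Sum.inr a) (Sum.inr b) :=
    .cons (adj_lr c a).symm (.cons (adj_lr c b) .nil)
  have hle := SimpleGraph.dist_le w
  simp only [w, SimpleGraph.Walk.length_cons, SimpleGraph.Walk.length_nil] at hle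
  have h0 : (completeBipartiteGraph (Fin m) (Fin n)).dist (Sum.inr a) (Sum.inr b) ≠ 0 := by
    rw [Ne, SimpleGraph.dist_eq_zero_iff_eq_or_not_reachable]
    push_neg
    exact ⟨by simpa using hab, ⟨w⟩⟩
  have h1 : (completeBipartiteGraph (Fin m) (Fin n)).dist (Sum.inr a) (Sum.inr b) ≠ 1 := by
    rw [Ne, SimpleGraph.dist_eq_one_iff_adj]
    simp
  omega

lemma dist_le_two (hm : 1 ≤ m) (hn : 1 ≤ n) (v w : Fin m ⊕ Fin n) :
    (completeBipartiteGraph (Fin m) (Fin n)).dist v w ≤ 2 := by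
  rcases v with a | a <;> rcases w with b | b
  · rcases eq_or_ne a b with rfl | h
    · rw [SimpleGraph.dist_self]; omega
    · exact le_of_eq (dist_ll hn h)
  · exact le_trans (le_of_eq (dist_lr a b)) one_le_two
  · exact le_trans (le_of_eq (dist_rl a b)) one_le_two
  · rcases eq_or_ne a b with rfl | h
    · rw [SimpleGraph.dist_self]; omega
    · exact le_of_eq (dist_rr hm h)

lemma ecc_eq (hm : 2 ≤ m) (hn : 2 ≤ n) (v : Fin m ⊕ Fin n) :
    ecc (completeBipartiteGraph (Fin m) (Fin n)) v = 2 := by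
  haveI : Nontrivial (Fin m) := Fin.nontrivial_iff_two_le.mpr hm
  haveI : Nontrivial (Fin n) := Fin.nontrivial_iff_two_le.mpr hn
  apply le_antisymm
  · exact Finset.sup_le fun w _ => dist_le_two (by omega) (by omega) v w
  · rcases v with a | a
    · obtain ⟨b, hb⟩ := exists_ne a
      calc (2:ℕ) = (completeBipartiteGraph (Fin m) (Fin n)).dist (Sum.inl a) (Sum.inl b) :=
            (dist_ll (by omega) hb.symm).symm
        _ ≤ _ := Finset.le_sup (Finset.mem_univ _)
    · obtain ⟨b, hb⟩ := exists_ne a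
      calc (2:ℕ) = (completeBipartiteGraph (Fin m) (Fin n)).dist (Sum.inr a) (Sum.inr b) :=
            (dist_rr (by omega) hb.symm).symm
        _ ≤ _ := Finset.le_sup (Finset.mem_univ _)

lemma eccMatrix_ll (hm : 2 ≤ m) (hn : 2 ≤ n) (a b : Fin m) :
    eccMatrix (completeBipartiteGraph (Fin m) (Fin n)) (Sum.inl a) (Sum.inl b)
      = if a = b then 0 else 2 := by
  rcases eq_or_ne a b with rfl | h
  · simp [eccMatrix]
  · simp [eccMatrix, ecc_eq hm hn, dist_ll (by omega : 1 ≤ n) h, h]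

lemma eccMatrix_rr (hm : 2 ≤ m) (hn : 2 ≤ n) (a b : Fin n) :
    eccMatrix (completeBipartiteGraph (Fin m) (Fin n)) (Sum.inr a) (Sum.inr b)
      = if a = b then 0 else 2 := by
  rcases eq_or_ne a b with rfl | h
  · simp [eccMatrix]
  · simp [eccMatrix, ecc_eq hm hn, dist_rr (by omega : 1 ≤ m) h, h]

lemma eccMatrix_lr (hm : 2 ≤ m) (hn : 2 ≤ n) (a : Fin m) (b : Fin n) :
    eccMatrix (completeBipartiteGraph (Fin m) (Fin n)) (Sum.inl a) (Sum.inr b) = 0 := by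
  simp [eccMatrix, ecc_eq hm hn, dist_lr a b]

lemma eccMatrix_rl (hm : 2 ≤ m) (hn : 2 ≤ n) (a : Fin n) (b : Fin m) :
    eccMatrix (completeBipartiteGraph (Fin m) (Fin n)) (Sum.inr a) (Sum.inl b) = 0 := by
  simp [eccMatrix, ecc_eq hm hn, dist_rl a b]

lemma sum_ite_aux {k : ℕ} (a : Fin k) :
    ∑ b : Fin k, (if a = b then (0:ℝ) else 2) = 2 * k - 2 := by
  have h : ∀ b : Fin k, (if a = b then (0:ℝ) else 2) = 2 - (if a = b then 2 else 0) := by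
    intro b; split <;> ring
  simp only [h]
  rw [Finset.sum_sub_distrib, Finset.sum_const, Finset.sum_ite_eq]
  simp [mul_comm]

lemma eccTrans_l (hm : 2 ≤ m) (hn : 2 ≤ n) (a : Fin m) :
    eccTrans (completeBipartiteGraph (Fin m) (Fin n)) (Sum.inl a) = 2 * m - 2 := by
  rw [eccTrans, Fintype.sum_sum_type]
  simp only [eccMatrix_ll hm hn, eccMatrix_lr hm hn, Finset.sum_const_zero, add_zero]
  exact sum_ite_aux a

lemma eccTrans_r (hm : 2 ≤ m) (hn : 2 ≤ n) (a : Fin n) :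
    eccTrans (completeBipartiteGraph (Fin m) (Fin n)) (Sum.inr a) = 2 * n - 2 := by
  rw [eccTrans, Fintype.sum_sum_type]
  simp only [eccMatrix_rr hm hn, eccMatrix_rl hm hn, Finset.sum_const_zero, zero_add]
  exact sum_ite_aux a

lemma det_aux {k : ℕ} (hk : 2 ≤ k) (a b : ℝ) :
    (a • (1 : Matrix (Fin k) (Fin k) ℝ) + b • Matrix.of (fun _ _ => (1:ℝ))).det
      = a ^ (k - 1) * (a + k * b) := by
  rcases eq_or_ne a 0 with rfl | ha
  · simp only [zero_smul, zero_add, zero_add]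
    rw [Matrix.det_smul]
    have hJ : (Matrix.of (fun _ _ => (1:ℝ)) : Matrix (Fin k) (Fin k) ℝ).det = 0 := by
      apply Matrix.det_zero_of_row_eq (i := (⟨0, by omega⟩ : Fin k)) (j := ⟨1, by omega⟩)
      · simp [Fin.ext_iff]
      · rfl
    rw [hJ, mul_zero, zero_pow (by omega : k - 1 ≠ 0), zero_mul]
  · have key : a • (1 : Matrix (Fin k) (Fin k) ℝ) + b • Matrix.of (fun _ _ => (1:ℝ))
        = a • (1 + Matrix.replicateCol Unit (fun _ => b / a) * Matrix.replicateRow Unit (fun _ => (1:ℝ))) := by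
      ext i j
      rcases eq_or_ne i j with rfl | h
      · simp [Matrix.mul_apply, Matrix.one_apply, Matrix.replicateCol, Matrix.replicateRow]
        field_simp
      · simp [Matrix.mul_apply, Matrix.one_apply, h, Matrix.replicateCol, Matrix.replicateRow]
        field_simp
    rw [key, Matrix.det_smul, Matrix.det_one_add_replicateCol_mul_replicateRow]
    simp only [dotProduct, one_mul, Finset.sum_const, Finset.card_univ, Fintype.card_fin,
      nsmul_eq_mul]
    have hak : a ^ k = a ^ (k - 1) * a := by
      rw [← pow_succ]; congr 1; omega
    rw [hak]
    field_simp

lemma eval_charpoly {k : Type*} [Fintype k] [DecidableEq k] (M : Matrix k k ℝ) (x : ℝ) :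
    M.charpoly.eval x = (x • (1 : Matrix k k ℝ) - M).det := by
  rw [Matrix.charpoly, ← Polynomial.coe_evalRingHom, RingHom.map_det]
  congr 1
  ext i j
  rcases eq_or_ne i j with rfl | h
  · simp [Matrix.charmatrix_apply_eq, Matrix.one_apply]
  · simp [Matrix.charmatrix_apply_ne _ _ _ h, Matrix.one_apply_ne h]

end Aux

theorem stmt9 {m n : ℕ} (hm : 2 ≤ m) (hn : 2 ≤ n) :
    (eccLap (completeBipartiteGraph (Fin m) (Fin n))).charpoly =
      X ^ 2 * (X - C (2 * (m : ℝ))) ^ (m - 1) * (X - C (2 * (n : ℝ))) ^ (n - 1) := by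
  set G := completeBipartiteGraph (Fin m) (Fin n) with hG
  set A : Matrix (Fin m) (Fin m) ℝ :=
    (2 * (m:ℝ)) • 1 + (-2 : ℝ) • Matrix.of (fun _ _ => (1:ℝ)) with hA
  set B : Matrix (Fin n) (Fin n) ℝ :=
    (2 * (n:ℝ)) • 1 + (-2 : ℝ) • Matrix.of (fun _ _ => (1:ℝ)) with hB
  have hL : eccLap G = Matrix.fromBlocks A 0 0 B := by
    ext i j
    rcases i with a | a <;> rcases j with b | b
    · rcases eq_or_ne a b with rfl | h
      · simp [eccLap, Matrix.diagonal_apply, eccTrans_l hm hn, eccMatrix_ll hm hn,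
          hA, hG, Matrix.one_apply]
        ring
      · simp [eccLap, Matrix.diagonal_apply, eccMatrix_ll hm hn, h,
          hA, hG, Matrix.one_apply, Sum.inl.injEq]
    · simp [eccLap, Matrix.diagonal_apply, eccMatrix_lr hm hn, hG]
    · simp [eccLap, Matrix.diagonal_apply, eccMatrix_rl hm hn, hG]
    · rcases eq_or_ne a b with rfl | h
      · simp [eccLap, Matrix.diagonal_apply, eccTrans_r hm hn, eccMatrix_rr hm hn,
          hB, hG, Matrix.one_apply]
        ring
      · simp [eccLap, Matrix.diagonal_apply, eccMatrix_rr hm hn, h,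
          hB, hG, Matrix.one_apply, Sum.inr.injEq]
  apply Polynomial.funext
  intro x
  rw [_root_.eval_charpoly, hL]
  have hblock : x • (1 : Matrix (Fin m ⊕ Fin n) (Fin m ⊕ Fin n) ℝ) - Matrix.fromBlocks A 0 0 B
      = Matrix.fromBlocks (x • 1 - A) 0 0 (x • 1 - B) := by
    rw [← Matrix.fromBlocks_one, Matrix.fromBlocks_smul]
    ext i j
    rcases i with a | a <;> rcases j with b | b <;>
      simp [Matrix.fromBlocks, Matrix.sub_apply]
  rw [hblock, Matrix.det_fromBlocks_zero₂₁]
  have hAdet : (x • 1 - A).det = (x - 2 * m) ^ (m - 1) * ((x - 2 * m) + m * 2) := by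
    have : x • (1 : Matrix (Fin m) (Fin m) ℝ) - A
        = (x - 2 * m) • 1 + (2:ℝ) • Matrix.of (fun _ _ => (1:ℝ)) := by
      rw [hA]
      ext i j
      simp [Matrix.one_apply]
      split <;> ring
    rw [this, det_aux hm]
  have hBdet : (x • 1 - B).det = (x - 2 * n) ^ (n - 1) * ((x - 2 * n) + n * 2) := by
    have : x • (1 : Matrix (Fin n) (Fin n) ℝ) - B
        = (x - 2 * n) • 1 + (2:ℝ) • Matrix.of (fun _ _ => (1:ℝ)) := by
      rw [hB]
      ext i j
      simp [Matrix.one_apply]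
      split <;> ring
    rw [this, det_aux hn]
  rw [hAdet, hBdet]
  have hxm : (x - 2 * m) + (m:ℝ) * 2 = x := by ring
  have hxn : (x - 2 * n) + (n:ℝ) * 2 = x := by ring
  rw [hxm, hxn]
  simp only [eval_mul, eval_pow, eval_sub, eval_X, eval_C]
  ring
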